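/- A point y of the transportation polytope TP(u,v) is a vertex (extreme point) of TP(u,v) if and only if the support graph of y contains no cycle, i.e., it is a forest. -/

import Mathlib

/-!
A point `y` of `TP(u,v)` fails to be extreme exactly when some nonzero matrix `w` with zero row
and column sums and support inside that of `y` can be added to `y` with both signs. The alternating
`±1` matrix on a cycle of the support is such a `w`. Conversely, the support of such a `w` meets
each of its rows and columns at least twice, so an alternating row/column walk inside it never gets
stuck; the first time the walk returns to a row or a column it has visited, it closes a cycle.
-/

open scoped BigOperators

def TP (N1 N2 : ℕ) (u : Fin N1 → ℝ) (v : Fin N2 → ℝ) :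
    Set (Matrix (Fin N1) (Fin N2) ℝ) :=
  {y | (∀ i j, 0 ≤ y i j) ∧ (∀ i, ∑ j, y i j = u i) ∧ (∀ j, ∑ i, y i j = v j)}

def suppSet {N1 N2 : ℕ} (y : Matrix (Fin N1) (Fin N2) ℝ) : Set (Fin N1 × Fin N2) :=
  {p | 0 < y p.1 p.2}

def IsCycleSet {N1 N2 : ℕ} (D : Set (Fin N1 × Fin N2)) : Prop :=
  ∃ k : ℕ, 2 ≤ k ∧ ∃ (σ : ZMod k → Fin N1) (δ : ZMod k → Fin N2),
    Function.Injective σ ∧ Function.Injective δ ∧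
    D = {p | ∃ t, p = (σ t, δ t)} ∪ {p | ∃ t, p = (σ (t + 1), δ t)}

open Set Function Filter Topology

def HasZeroLineSums {m n R : Type*} [Fintype m] [Fintype n] [AddCommMonoid R]
    (w : Matrix m n R) : Prop :=
  (∀ i, ∑ j, w i j = 0) ∧ (∀ j, ∑ i, w i j = 0)

lemma Fintype.exists_ne_ne_zero_of_sum_eq_zero {ι M : Type*} [Fintype ι] [AddCommMonoid M]
    {f : ι → M} (h : ∑ i, f i = 0) {a : ι} (ha : f a ≠ 0) : ∃ b ≠ a, f b ≠ 0 := by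
  by_contra! hb
  exact ha (by rwa [Fintype.sum_eq_single a hb] at h)

lemma ZMod.apply_val_add_one {α : Type*} {k : ℕ} [NeZero k] {f : ℕ → α} (hf : f k = f 0)
    (t : ZMod k) : f (t + 1).val = f (t.val + 1) := by
  rw [ZMod.val_add, ZMod.val_one_eq_one_mod, Nat.add_mod_mod]
  rcases Nat.lt_or_ge (t.val + 1) k with h | h
  · rw [Nat.mod_eq_of_lt h]
  · rw [le_antisymm (ZMod.val_lt t) h, Nat.mod_self, hf]

lemma ZMod.injective_apply_add_val {α : Type*} {k : ℕ} [NeZero k] {f : ℕ → α} {a : ℕ}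
    (hf : InjOn f (Ico a (a + k))) : Injective fun t : ZMod k => f (a + t.val) := fun s t h =>
  ZMod.val_injective k <| Nat.add_left_cancel <|
    hf (by simp [ZMod.val_lt]) (by simp [ZMod.val_lt]) h

structure IsAlternatingWalk {α β : Type*} (S : Set (α × β)) (I : ℕ → α) (J : ℕ → β) : Prop where
  mem : ∀ n, (I n, J n) ∈ S
  mem_succ : ∀ n, (I (n + 1), J n) ∈ S
  fst_succ_ne : ∀ n, I (n + 1) ≠ I n
  snd_succ_ne : ∀ n, J (n + 1) ≠ J n

lemma exists_isAlternatingWalk {α β : Type*} {S : Set (α × β)} (hne : S.Nonempty)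
    (hrow : ∀ p ∈ S, ∃ i ≠ p.1, (i, p.2) ∈ S) (hcol : ∀ p ∈ S, ∃ j ≠ p.2, (p.1, j) ∈ S) :
    ∃ I J, IsAlternatingWalk S I J := by
  have step : ∀ p : S, ∃ q : S, q.1.1 ≠ p.1.1 ∧ q.1.2 ≠ p.1.2 ∧ (q.1.1, p.1.2) ∈ S := by
    rintro ⟨p, hp⟩
    obtain ⟨i, hi, hiS⟩ := hrow p hp
    obtain ⟨j, hj, hjS⟩ := hcol _ hiS
    exact ⟨⟨(i, j), hjS⟩, hi, hj, hiS⟩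
  choose F hF using step
  obtain ⟨p, hp⟩ := hne
  let W : ℕ → S := fun n => F^[n] ⟨p, hp⟩
  refine ⟨fun n => (W n).1.1, fun n => (W n).1.2,
    ⟨fun n => (W n).2, fun n => ?_, fun n => ?_, fun n => ?_⟩⟩ <;>
    simp only [W, iterate_succ_apply']
  exacts [(hF _).2.2, (hF _).1, (hF _).2.1]

namespace IsAlternatingWalk

variable {N1 N2 : ℕ} {S : Set (Fin N1 × Fin N2)} {I : ℕ → Fin N1} {J : ℕ → Fin N2}

lemma exists_isCycleSet_of_fst_eq (hW : IsAlternatingWalk S I J) {a n : ℕ} (han : a < n)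
    (hIn : I n = I a) (hI : InjOn I (Ico a n)) (hJ : InjOn J (Ico a n)) :
    ∃ D ⊆ S, IsCycleSet D := by
  obtain ⟨k, rfl⟩ := Nat.exists_eq_add_of_le han.le
  have hk : 2 ≤ k := by
    by_contra! h
    obtain rfl : k = 1 := by omega
    exact hW.fst_succ_ne a hIn
  have : NeZero k := ⟨by omega⟩
  refine ⟨_, ?_, k, hk, fun t => I (a + t.val), fun t => J (a + t.val),
    ZMod.injective_apply_add_val hI, ZMod.injective_apply_add_val hJ, rfl⟩
  rintro _ (⟨t, rfl⟩ | ⟨t, rfl⟩)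
  · exact hW.mem _
  · dsimp only
    rw [ZMod.apply_val_add_one (f := fun m => I (a + m)) hIn]
    exact hW.mem_succ _

lemma exists_isCycleSet_of_snd_eq (hW : IsAlternatingWalk S I J) {a n : ℕ} (han : a < n)
    (hJn : J n = J a) (hI : InjOn I (Ioc a n)) (hJ : InjOn J (Ico a n)) :
    ∃ D ⊆ S, IsCycleSet D := by
  obtain ⟨k, rfl⟩ := Nat.exists_eq_add_of_le han.le
  have hk : 2 ≤ k := by
    by_contra! h
    obtain rfl : k = 1 := by omega
    exact hW.snd_succ_ne a hJn
  have : NeZero k := ⟨by omega⟩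
  have hI' : InjOn (fun m => I (m + 1)) (Ico a (a + k)) :=
    hI.comp (add_left_injective 1).injOn fun _ ⟨h₁, h₂⟩ => ⟨by omega, by omega⟩
  refine ⟨_, ?_, k, hk, fun t => I (a + t.val + 1), fun t => J (a + (t + 1).val),
    ZMod.injective_apply_add_val hI', (ZMod.injective_apply_add_val hJ).comp (add_left_injective 1),
    rfl⟩
  -- rows `I (a + 1), …, I n`, columns `J (a + 1), …, J n = J a`
  rintro _ (⟨t, rfl⟩ | ⟨t, rfl⟩)
  · dsimp only
    rw [ZMod.apply_val_add_one (f := fun m => J (a + m)) hJn]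
    exact hW.mem _
  · exact hW.mem_succ _

lemma exists_isCycleSet (hW : IsAlternatingWalk S I J) : ∃ D ⊆ S, IsCycleSet D := by
  let P n := InjOn I (Iio n) ∧ InjOn J (Iio n)
  have hP : ¬ ∀ n, P n := fun h => not_injective_infinite_finite I fun x y hxy =>
    (h (max x y + 1)).1 (by simp) (by simp) hxy
  obtain ⟨n, ⟨hI, hJ⟩, hn⟩ : ∃ n, P n ∧ ¬ P (n + 1) := by
    by_contra! h
    exact hP fun n => Nat.rec (by simp [P]) h n
  simp only [P, Iio_add_one_eq_Iic, ← Iio_insert, injOn_insert self_notMem_Iio, hI, hJ,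
    true_and, not_and, not_not] at hn
  by_cases hIn : I n ∈ I '' Iio n
  · obtain ⟨a, ha, hIa⟩ := hIn
    exact hW.exists_isCycleSet_of_fst_eq ha hIa.symm (hI.mono Ico_subset_Iio_self)
      (hJ.mono Ico_subset_Iio_self)
  · obtain ⟨a, ha, hJa⟩ := hn hIn
    have hI' : InjOn I (Iic n) := by
      rw [← Iio_insert, injOn_insert self_notMem_Iio]
      exact ⟨hI, hIn⟩
    exact hW.exists_isCycleSet_of_snd_eq ha hJa.symm (hI'.mono Ioc_subset_Iic_self)
      (hJ.mono Ico_subset_Iio_self)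

end IsAlternatingWalk

section Matrix

variable {N1 N2 : ℕ}

lemma HasZeroLineSums.exists_isCycleSet_subset_support {w : Matrix (Fin N1) (Fin N2) ℝ}
    (hw : HasZeroLineSums w) (hw0 : w ≠ 0) :
    ∃ D ⊆ support (uncurry w), IsCycleSet D := by
  have hne : (support (uncurry w)).Nonempty := by
    contrapose! hw0
    ext i j
    exact congrFun (support_eq_empty_iff.mp hw0) (i, j)
  obtain ⟨I, J, hW⟩ := exists_isAlternatingWalk hne
    (fun p hp => Fintype.exists_ne_ne_zero_of_sum_eq_zero (hw.2 p.2) hp)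
    (fun p hp => Fintype.exists_ne_ne_zero_of_sum_eq_zero (hw.1 p.1) hp)
  exact hW.exists_isCycleSet

lemma IsCycleSet.exists_hasZeroLineSums {D : Set (Fin N1 × Fin N2)} (hD : IsCycleSet D) :
    ∃ w : Matrix (Fin N1) (Fin N2) ℝ, w ≠ 0 ∧ HasZeroLineSums w ∧ support (uncurry w) ⊆ D := by
  obtain ⟨k, hk, σ, δ, hσ, hδ, rfl⟩ := hD
  have : Fact (1 < k) := ⟨hk⟩
  set w : Matrix (Fin N1) (Fin N2) ℝ :=
    ∑ t, (Matrix.single (σ t) (δ t) 1 - Matrix.single (σ (t + 1)) (δ t) 1)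
  have hw_apply : ∀ p : Fin N1 × Fin N2, w p.1 p.2 = ∑ t,
      ((if (σ t, δ t) = p then 1 else 0) - (if (σ (t + 1), δ t) = p then 1 else 0)) := by
    simp [w, Matrix.sum_apply, Matrix.single_apply, Prod.ext_iff]
  have hw00 : w (σ 0) (δ 0) = 1 := by
    rw [hw_apply (_, _), Fintype.sum_eq_single 0 fun t ht => by simp [hδ.ne ht]]
    simp [hσ.ne one_ne_zero]
  refine ⟨w, fun h => by simp [h] at hw00, ⟨fun i => ?_, fun j => ?_⟩, fun p hp => ?_⟩
  · simp only [hw_apply (_, _)]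
    rw [Finset.sum_comm]
    simp only [Prod.mk.injEq, Finset.sum_sub_distrib, ite_and, Finset.sum_ite_irrel,
      Finset.sum_ite_eq, Finset.mem_univ, if_true, Finset.sum_const_zero]
    exact sub_eq_zero.mpr
      (Equiv.sum_comp (Equiv.addRight (1 : ZMod k)) fun t => if σ t = i then (1 : ℝ) else 0).symm
  · simp only [hw_apply (_, _)]
    rw [Finset.sum_comm]
    simp [Prod.mk.injEq, ite_and, Finset.sum_sub_distrib]
  · have hp' : w p.1 p.2 ≠ 0 := hp
    rw [hw_apply] at hp'
    obtain ⟨t, -, ht⟩ := Finset.exists_ne_zero_of_sum_ne_zero hp'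
    by_contra hD
    simp only [mem_union, mem_ofPred_eq, not_or, not_exists] at hD
    simp [if_neg (Ne.symm (hD.1 t)), if_neg (Ne.symm (hD.2 t))] at ht

variable {u : Fin N1 → ℝ} {v : Fin N2 → ℝ} {y w : Matrix (Fin N1) (Fin N2) ℝ}

lemma hasZeroLineSums_sub {y' : Matrix (Fin N1) (Fin N2) ℝ} (hy : y ∈ TP N1 N2 u v)
    (hy' : y' ∈ TP N1 N2 u v) : HasZeroLineSums (y - y') :=
  ⟨fun i => by simp [Finset.sum_sub_distrib, hy.2.1 i, hy'.2.1 i],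
    fun j => by simp [Finset.sum_sub_distrib, hy.2.2 j, hy'.2.2 j]⟩

lemma add_smul_mem_TP (hy : y ∈ TP N1 N2 u v) (hw : HasZeroLineSums w) {c : ℝ}
    (hc : ∀ i j, 0 ≤ y i j + c * w i j) : y + c • w ∈ TP N1 N2 u v :=
  ⟨fun i j => by simpa using hc i j,
    fun i => by simp [Finset.sum_add_distrib, ← Finset.mul_sum, hy.2.1 i, hw.1 i],
    fun j => by simp [Finset.sum_add_distrib, ← Finset.mul_sum, hy.2.2 j, hw.2 j]⟩

lemma eventually_nonneg_add_mul (hy : ∀ i j, 0 ≤ y i j) (hw : support (uncurry w) ⊆ suppSet y) :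
    ∀ᶠ c in 𝓝 (0 : ℝ), ∀ i j, 0 ≤ y i j + c * w i j := by
  simp only [eventually_all]
  intro i j
  rcases (hy i j).eq_or_lt with h | h
  · have : w i j = 0 := not_not.mp fun hij => (hw (a := (i, j)) hij).ne h
    simp [this, ← h]
  · exact ((continuous_const.add (continuous_mul_const (w i j))).tendsto' 0 (y i j)
      (by simp)).eventually_const_le h

lemma mem_extremePoints_TP_iff (hy : y ∈ TP N1 N2 u v) :
    y ∈ extremePoints ℝ (TP N1 N2 u v) ↔
      ¬ ∃ w : Matrix (Fin N1) (Fin N2) ℝ, w ≠ 0 ∧ HasZeroLineSums w ∧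
        support (uncurry w) ⊆ suppSet y := by
  constructor
  · rintro hext ⟨w, hw0, hw, hsupp⟩
    have hev := eventually_nonneg_add_mul hy.1 hsupp
    have hne : ∀ᶠ c in 𝓝[≠] (0 : ℝ), c ≠ 0 := self_mem_nhdsWithin
    obtain ⟨c, ⟨hc, hc'⟩, hc0⟩ := ((hev.and ((continuous_neg.tendsto' 0 0 neg_zero).eventually
      hev)).filter_mono nhdsWithin_le_nhds |>.and hne).exists
    have hseg : y ∈ openSegment ℝ (y + c • w) (y + (-c) • w) :=
      ⟨1 / 2, 1 / 2, by norm_num, by norm_num, by norm_num, by module⟩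
    have := hext.2 (add_smul_mem_TP hy hw hc) (add_smul_mem_TP hy hw hc') hseg
    exact hw0 ((smul_eq_zero.mp (add_eq_left.mp this)).resolve_left hc0)
  · refine fun h => ⟨hy, fun y₁ hy₁ y₂ hy₂ hseg => ?_⟩
    obtain ⟨a, b, ha, hb, hab, rfl⟩ := hseg
    have hsupp : support (uncurry (y₁ - y₂)) ⊆ suppSet (a • y₁ + b • y₂) := by
      rintro ⟨i, j⟩ hij
      have h₂ := hy₂.1 i j
      show 0 < a * y₁ i j + b * y₂ i j
      rcases (hy₁.1 i j).eq_or_lt with h₁ | h₁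
      · have : 0 < y₂ i j := h₂.lt_of_ne (h₁ ▸ sub_ne_zero.mp hij)
        exact add_pos_of_nonneg_of_pos (by rw [← h₁, mul_zero]) (mul_pos hb this)
      · exact add_pos_of_pos_of_nonneg (mul_pos ha h₁) (mul_nonneg hb.le h₂)
    obtain rfl : y₁ = y₂ := by
      by_contra hne
      exact h ⟨_, sub_ne_zero.mpr hne, hasZeroLineSums_sub hy₁ hy₂, hsupp⟩
    rw [← add_smul, hab, one_smul]

end Matrix

theorem vertex_iff_forest_general (N1 N2 : ℕ)
    (u : Fin N1 → ℝ) (v : Fin N2 → ℝ)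
    (y : Matrix (Fin N1) (Fin N2) ℝ) (hy : y ∈ TP N1 N2 u v) :
    y ∈ Set.extremePoints ℝ (TP N1 N2 u v) ↔
      ¬ ∃ D : Set (Fin N1 × Fin N2), D ⊆ suppSet y ∧ IsCycleSet D := by
  rw [mem_extremePoints_TP_iff hy]
  refine not_congr ⟨fun ⟨w, hw0, hw, hsupp⟩ => ?_, fun ⟨D, hD, hcyc⟩ => ?_⟩
  · obtain ⟨D, hDw, hcyc⟩ := hw.exists_isCycleSet_subset_support hw0
    exact ⟨D, hDw.trans hsupp, hcyc⟩
  · obtain ⟨w, hw0, hw, hwD⟩ := hcyc.exists_hasZeroLineSums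
    exact ⟨w, hw0, hw, hwD.trans hD⟩

theorem vertex_iff_forest (N1 N2 : ℕ) (hN1 : 0 < N1) (hN2 : 0 < N2)
    (u : Fin N1 → ℝ) (v : Fin N2 → ℝ)
    (hu : ∀ i, 0 < u i) (hv : ∀ j, 0 < v j)
    (huv : ∑ i, u i = ∑ j, v j)
    (y : Matrix (Fin N1) (Fin N2) ℝ) (hy : y ∈ TP N1 N2 u v) :
    y ∈ Set.extremePoints ℝ (TP N1 N2 u v) ↔
      ¬ ∃ D : Set (Fin N1 × Fin N2), D ⊆ suppSet y ∧ IsCycleSet D :=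
  vertex_iff_forest_general N1 N2 u v y hy
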